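/- Let k be a field of characteristic p > 0, G a finite p-group, and V a finite-dimensional kG-module. Then V is a free kG-module if and only if tr(V) = V^G, where tr(v) = Σ_{g∈G} v·g. -/

import Mathlib

/-!
The fixed vectors of the regular module `k[G]` are the multiples of `N = ∑ g`, so in a free
module every fixed vector is `N` times something.

Conversely, a `p`-group acting on a nonzero module of exponent `p` has a nonzero fixed vector
(count fixed points in a finite invariant subgroup), so a `k[G]`-linear map is injective as soon
as it kills no nonzero fixed vector. Take a basis `N • v i` of `V^G` and a `k`-linear
`Λ : V → kᵐ` extending its coordinate map. Averaging `Λ` over `G` gives a `k[G]`-linear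
`θ : V → k[G]ᵐ` with `θ x = N • Λ x` for fixed `x`; hence `θ` is injective, and `θ ∘ F`, where
`F (e i) = v i`, is the identity on fixed vectors. So `θ ∘ F` is injective, hence surjective by
finite-dimensionality, and `θ` is an isomorphism.
-/

open MonoidAlgebra

theorem IsPGroup.exists_fixed_ne_zero {p : ℕ} [Fact p.Prime] {G : Type*} [Group G] [Finite G]
    (hG : IsPGroup p G) {M : Type*} [AddCommGroup M] [DistribMulAction G M] [Nontrivial M]
    (hM : ∀ x : M, p • x = 0) : ∃ x : M, x ≠ 0 ∧ ∀ g : G, g • x = x := by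
  have : NeZero p := ⟨(Fact.out : p.Prime).ne_zero⟩
  have : Module (ZMod p) M := AddCommGroup.zmodModule hM
  obtain ⟨x₀, hx₀⟩ := exists_ne (0 : M)
  let W : Submodule (ZMod p) M := Submodule.span (ZMod p) (Set.range fun g : G => g • x₀)
  have hW (g : G) {y : M} (hy : y ∈ W) : g • y ∈ W := by
    have := Submodule.mem_map_of_mem (f := (DistribSMul.toAddMonoidHom M g).toZModLinearMap p) hy
    rw [Submodule.map_span] at this
    refine Submodule.span_mono ?_ this
    rintro _ ⟨_, ⟨h, rfl⟩, rfl⟩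
    exact ⟨g * h, mul_smul g h x₀⟩
  let S : SubMulAction G M := ⟨W, fun g _ => hW g⟩
  have : Module.Finite (ZMod p) W := Module.Finite.span_of_finite _ (Set.finite_range _)
  have : Finite S := Module.finite_of_finite (ZMod p) (M := W)
  have hx₀W : x₀ ∈ W := Submodule.subset_span ⟨1, one_smul G x₀⟩
  have hdvd : p ∣ Nat.card S := by
    change p ∣ Nat.card W
    have := addOrderOf_dvd_natCard (⟨x₀, hx₀W⟩ : W)
    rwa [addOrderOf_eq_prime (by ext; exact hM x₀) (by simpa using hx₀)] at this
  obtain ⟨⟨x, _⟩, hx, hx0⟩ := hG.exists_fixed_point_of_prime_dvd_card_of_fixed_point S hdvd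
    (a := ⟨0, W.zero_mem⟩) fun g => Subtype.ext (smul_zero g)
  exact ⟨x, fun h => hx0 (Subtype.ext h.symm), fun g => congrArg Subtype.val (hx g)⟩

namespace MonoidAlgebra

section Norm

variable {k : Type*} [CommSemiring k] {G : Type*} [Group G] [Fintype G]

theorem of_mul_sum_of (g : G) : of k G g * ∑ h : G, of k G h = ∑ h : G, of k G h := by
  simp only [Finset.mul_sum, ← map_mul]
  exact Fintype.sum_bijective _ (Group.mulLeft_bijective g) _ _ fun _ => rfl

theorem range_sum_of_smul_subset_fixed {M : Type*} [AddCommMonoid M] [Module k[G] M] :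
    (Set.range fun v : M => (∑ g : G, of k G g) • v) ⊆ {x : M | ∀ g : G, of k G g • x = x} := by
  rintro _ ⟨v, rfl⟩ g
  rw [smul_smul, of_mul_sum_of]

theorem coeff_sum_of (g : G) : (∑ h : G, of k G h).coeff g = 1 := by
  simp [coeff_sum, of_apply]

theorem sum_of_ne_zero [Nontrivial k] : ∑ g : G, of k G g ≠ 0 := fun h =>
  one_ne_zero <| (coeff_sum_of (k := k) (1 : G)).symm.trans (by rw [h]; rfl)

theorem eq_coeff_one_smul_sum_of {x : k[G]} (hx : ∀ g : G, of k G g * x = x) :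
    x = x.coeff 1 • ∑ g : G, of k G g := by
  ext h
  have hh : (of k G h * x).coeff h = x.coeff h := by rw [hx h]
  rw [of_apply, coeff_single_mul_apply, one_mul, inv_mul_cancel] at hh
  rw [coeff_smul_apply, coeff_sum_of, smul_eq_mul, mul_one, hh]

theorem fixed_subset_range_sum_of_smul_of_free {M : Type*} [AddCommMonoid M] [Module k[G] M]
    [Module.Free k[G] M] :
    {x : M | ∀ g : G, of k G g • x = x} ⊆ Set.range fun v : M => (∑ g : G, of k G g) • v := by
  intro x hx
  let b := Module.Free.chooseBasis k[G] M
  have hcoord (i) : b.repr x i = (b.repr x i).coeff 1 • ∑ g : G, of k G g :=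
    eq_coeff_one_smul_sum_of fun g => by
      rw [← smul_eq_mul, ← Finsupp.smul_apply, ← map_smul, hx g]
  refine ⟨(b.repr x).sum fun i r => algebraMap k k[G] (r.coeff 1) • b i, ?_⟩
  dsimp only
  conv_rhs => rw [← b.linearCombination_repr x, Finsupp.linearCombination_apply]
  rw [Finsupp.smul_sum]
  refine Finsupp.sum_congr fun i _ => ?_
  rw [smul_smul, ← Algebra.commutes, ← Algebra.smul_def, ← hcoord]

end Norm

end MonoidAlgebra

section CharP

variable {p : ℕ} [Fact p.Prime] {k : Type*} [CommRing k] [CharP k p]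
  {G : Type*} [Group G] [Finite G] {M : Type*} [AddCommGroup M] [Module k[G] M]

theorem IsPGroup.exists_fixed_ne_zero_of_module (hG : IsPGroup p G) [Nontrivial M] :
    ∃ x : M, x ≠ 0 ∧ ∀ g : G, of k G g • x = x := by
  let _ : DistribMulAction G M := DistribMulAction.compHom M (of k G)
  refine hG.exists_fixed_ne_zero fun x => ?_
  rw [← Nat.cast_smul_eq_nsmul k[G], ← map_natCast (algebraMap k k[G]), CharP.cast_eq_zero,
    map_zero, zero_smul]

theorem IsPGroup.injective_of_fixed {N : Type*} [AddCommGroup N] [Module k[G] N]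
    (hG : IsPGroup p G) (f : M →ₗ[k[G]] N)
    (hf : ∀ x : M, (∀ g : G, of k G g • x = x) → f x = 0 → x = 0) : Function.Injective f := by
  rw [← LinearMap.ker_eq_bot, ← Submodule.subsingleton_iff_eq_bot]
  by_contra h
  rw [not_subsingleton_iff_nontrivial] at h
  obtain ⟨⟨x, hxf⟩, hx0, hx⟩ := hG.exists_fixed_ne_zero_of_module (k := k) (M := LinearMap.ker f)
  exact hx0 (Subtype.ext (hf x (fun g => congrArg Subtype.val (hx g)) hxf))

end CharP

section Fixed

variable {k : Type*} [CommRing k] {G : Type*} [Group G]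
  {V : Type*} [AddCommGroup V] [Module k V] [Module k[G] V] [IsScalarTower k k[G] V]

variable (k G V) in
def fixedSubmodule : Submodule k V where
  carrier := {x | ∀ g : G, of k G g • x = x}
  add_mem' {x y} (hx : ∀ g : G, _) (hy : ∀ g : G, _) g := by rw [smul_add, hx g, hy g]
  zero_mem' g := smul_zero _
  smul_mem' c x (hx : ∀ g : G, _) g := by rw [smul_comm, hx g]

theorem LinearMap.sumOfConjugatesEquivariant_apply_of_fixed [Fintype G] {W : Type*}
    [AddCommGroup W] [Module k W] [Module k[G] W] [IsScalarTower k k[G] W] (π : W →ₗ[k] V)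
    {x : W} (hx : ∀ g : G, of k G g • x = x) :
    π.sumOfConjugatesEquivariant G x = (∑ g : G, of k G g) • π x := by
  rw [sumOfConjugatesEquivariant_apply, Finset.sum_smul]
  refine Fintype.sum_bijective _ (inv_involutive (G := G)).bijective _ _ fun g => ?_
  rw [conjugate_apply, ← of_apply, ← of_apply, hx]

end Fixed

theorem IsPGroup.free_of_fixed_subset_range_sum_of_smul {p : ℕ} [Fact p.Prime] {k : Type*}
    [Field k] [CharP k p] {G : Type*} [Group G] [Fintype G] (hG : IsPGroup p G) {V : Type*}
    [AddCommGroup V] [Module k V] [Module k[G] V] [IsScalarTower k k[G] V] [FiniteDimensional k V]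
    (h : {x : V | ∀ g : G, of k G g • x = x} ⊆ Set.range fun v => (∑ g : G, of k G g) • v) :
    Module.Free k[G] V := by
  set N := ∑ g : G, of k G g
  let b := Module.finBasis k (fixedSubmodule k G V)
  choose v hv using fun i => h (b i).2
  obtain ⟨Λ, hΛ⟩ := LinearMap.exists_extend b.equivFun.toLinearMap
  let θ := (LinearMap.compLeft (Algebra.linearMap k k[G]) _ ∘ₗ Λ).sumOfConjugatesEquivariant G
  let F := Fintype.linearCombination k[G] v
  have hθ (y : fixedSubmodule k G V) : θ y = fun i => b.equivFun y i • N := by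
    rw [LinearMap.sumOfConjugatesEquivariant_apply_of_fixed _ y.2]
    ext i : 1
    have hΛy : Λ y = b.equivFun y := LinearMap.congr_fun hΛ y
    simp only [Pi.smul_apply, LinearMap.comp_apply, LinearMap.compLeft_apply, Function.comp_apply,
      Algebra.linearMap_apply, smul_eq_mul, ← Algebra.commutes, ← Algebra.smul_def, hΛy]
    rfl
  have hF (c : Fin _ → k[G]) (hc : ∀ g : G, of k G g • c = c) :
      F c = b.equivFun.symm fun i => (c i).coeff 1 := by
    simp only [F, Fintype.linearCombination_apply, Module.Basis.equivFun_symm_apply,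
      Submodule.coe_sum, Submodule.coe_smul]
    refine Finset.sum_congr rfl fun i _ => ?_
    rw [← hv, ← smul_assoc, ← eq_coeff_one_smul_sum_of fun g => congrFun (hc g) i]
  have hθF (c : Fin _ → k[G]) (hc : ∀ g : G, of k G g • c = c) : θ (F c) = c := by
    rw [hF c hc, hθ, LinearEquiv.apply_symm_apply]
    ext i : 1
    exact (eq_coeff_one_smul_sum_of fun g => congrFun (hc g) i).symm
  have hθ_inj : Function.Injective θ := by
    refine hG.injective_of_fixed θ fun x hx hθx => ?_
    have hy : b.equivFun ⟨x, hx⟩ = 0 := by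
      ext i
      have := congrFun ((hθ ⟨x, hx⟩).symm.trans hθx) i
      exact (smul_eq_zero.mp this).resolve_right sum_of_ne_zero
    simpa using congrArg Subtype.val (b.equivFun.map_eq_zero_iff.mp hy)
  have hθF_inj : Function.Injective (θ ∘ₗ F) :=
    hG.injective_of_fixed _ fun c hc h0 => (hθF c hc).symm.trans h0
  have hθF_surj : Function.Surjective (θ ∘ₗ F) :=
    LinearMap.injective_iff_surjective (f := (θ ∘ₗ F).restrictScalars k) |>.mp hθF_inj
  exact Module.Free.of_equiv
    (LinearEquiv.ofBijective θ ⟨hθ_inj, (LinearMap.coe_comp θ F ▸ hθF_surj).of_comp⟩).symm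

/-- A finite-dimensional `kG`-module `V` (`char k = p`, `G` a finite `p`-group)
is free iff the image of the transfer map `v ↦ (Σ_{g∈G} g) • v` equals the fixed-point
subspace `V^G`. -/
theorem free_iff_trace_surjective
    {p : ℕ} [Fact p.Prime] (k : Type*) [Field k] [CharP k p]
    (G : Type*) [Group G] [Fintype G] (hG : IsPGroup p G)
    (V : Type*) [AddCommGroup V] [Module k V] [Module (MonoidAlgebra k G) V]
    [IsScalarTower k (MonoidAlgebra k G) V] [FiniteDimensional k V] :
    Module.Free (MonoidAlgebra k G) V ↔
      (Set.range (fun v : V => ((∑ g : G, MonoidAlgebra.of k G g) : MonoidAlgebra k G) • v)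
        = {x : V | ∀ g : G, MonoidAlgebra.of k G g • x = x}) :=
  ⟨fun _ => range_sum_of_smul_subset_fixed.antisymm fixed_subset_range_sum_of_smul_of_free,
    fun h => hG.free_of_fixed_subset_range_sum_of_smul h.superset⟩
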